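/- arXiv:1710.09316 — 2 statements merged into one kernel-verified Lean document; each statement's English description precedes it below -/
import Mathlib

section
/- There exists an absolute constant c > 0 such that for every finite set A ⊆ ℤ_{>0} with |AA| ≤ K|A| (K a positive integer), one has E_+(A) ≤ c^K |A|^2. -/
/-!
For a prime `p`, in every solution of `a + b = c + d` in positive integers the smallest `p`-adic
valuation occurs twice, so two of `a, b, c, d` lie in a common fibre `Aₘ = {a ∈ A | v_p(a) = m}`.
By Cauchy–Schwarz the quadruples with two entries in `Aₘ` number at most `√E(Aₘ) √E(A)` for each of
the six placements of those entries, whence `√E(A) ≤ 6 ∑ₘ √E(Aₘ)`. Splitting along a prime on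
which `A` is not constant lowers the dimension `d` of the set `S` of exponent vectors of `A`, so
induction on `d` gives `√E(A) ≤ 6^d |A|`. As `S + S` is the set of exponent vectors of `AA`,
Freiman's lemma `|S + S| ≥ (d + 1)|S| - d(d + 1)/2` turns `|AA| ≤ K|A|` into `d ≤ 2K`.
-/

open scoped Pointwise

/-- Additive energy of a finite set of naturals. -/
def addEnergy (A : Finset ℕ) : ℕ :=
  ((A ×ˢ A ×ˢ A ×ˢ A).filter (fun x => x.1 + x.2.1 = x.2.2.1 + x.2.2.2)).card

open Finset hiding addEnergy
open Module

section Collisions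

variable {ι κ β : Type*} [DecidableEq β]

def collisions (S : Finset ι) (T : Finset κ) (f : ι → β) (g : κ → β) : Finset (ι × κ) :=
  {p ∈ S ×ˢ T | f p.1 = g p.2}

lemma card_collisions_eq_sum {S : Finset ι} {T : Finset κ} {f : ι → β} {g : κ → β}
    {I : Finset β} (hS : Set.MapsTo f S I) :
    #(collisions S T f g) = ∑ b ∈ I, #{s ∈ S | f s = b} * #{t ∈ T | g t = b} := by
  rw [collisions, card_eq_sum_card_fiberwise (f := fun p => f p.1) (t := I)
    fun p hp => hS (mem_product.1 (mem_filter.1 hp).1).1]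
  refine sum_congr rfl fun b _ => ?_
  rw [← card_product]
  congr 1
  ext ⟨s, t⟩
  simp only [mem_filter, mem_product]
  constructor
  · rintro ⟨⟨⟨hs, ht⟩, hst⟩, rfl⟩
    exact ⟨⟨hs, rfl⟩, ht, hst.symm⟩
  · rintro ⟨⟨hs, rfl⟩, ht, hst⟩
    exact ⟨⟨⟨hs, ht⟩, hst.symm⟩, rfl⟩

theorem card_collisions_sq_le (S : Finset ι) (T : Finset κ) (f : ι → β) (g : κ → β) :
    #(collisions S T f g) ^ 2 ≤ #(collisions S S f f) * #(collisions T T g g) := by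
  have hS : Set.MapsTo f S ↑(S.image f ∪ T.image g) := fun s hs =>
    mem_union_left _ (mem_image_of_mem f hs)
  have hT : Set.MapsTo g T ↑(S.image f ∪ T.image g) := fun t ht =>
    mem_union_right _ (mem_image_of_mem g ht)
  rw [card_collisions_eq_sum hS, card_collisions_eq_sum hS, card_collisions_eq_sum hT]
  simpa only [sq] using sum_mul_sq_le_sq_mul_sq _ _ _

end Collisions

def addQuads (W X Y Z : Finset ℕ) : Finset ((ℕ × ℕ) × ℕ × ℕ) :=
  collisions (W ×ˢ X) (Y ×ˢ Z) (fun p => p.1 + p.2) (fun p => p.1 + p.2)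

lemma addEnergy_eq_card_addQuads (A : Finset ℕ) : addEnergy A = #(addQuads A A A A) :=
  card_equiv (Equiv.prodAssoc ℕ ℕ (ℕ × ℕ)).symm fun _ => by
    simp [addQuads, collisions, and_assoc]

lemma card_addQuads_eq_card_collisions_sub (W X : Finset ℕ) :
    #(addQuads W X W X) = #(collisions (W ×ˢ W) (X ×ˢ X)
      (fun p => (p.1 : ℤ) - p.2) (fun p => (p.1 : ℤ) - p.2)) := by
  refine card_nbij' (fun q => ((q.1.1, q.2.1), (q.2.2, q.1.2)))
    (fun q => ((q.1.1, q.2.2), (q.1.2, q.2.1))) ?_ ?_ (fun _ _ => rfl) (fun _ _ => rfl) <;>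
  · rintro ⟨⟨a, b⟩, c, d⟩
    simp only [addQuads, collisions, coe_filter, mem_product, Set.mem_ofPred_eq]
    rintro ⟨h, he⟩
    exact ⟨by tauto, by omega⟩

lemma card_addQuads_sq_le (W X Y Z : Finset ℕ) :
    #(addQuads W X Y Z) ^ 2 ≤ #(addQuads W X W X) * #(addQuads Y Z Y Z) :=
  card_collisions_sq_le _ _ _ _

lemma card_addQuads_sq_le_addEnergy_mul (W X : Finset ℕ) :
    #(addQuads W X W X) ^ 2 ≤ addEnergy W * addEnergy X := by
  rw [addEnergy_eq_card_addQuads, addEnergy_eq_card_addQuads,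
    card_addQuads_eq_card_collisions_sub, card_addQuads_eq_card_collisions_sub,
    card_addQuads_eq_card_collisions_sub]
  exact card_collisions_sq_le _ _ _ _

theorem card_addQuads_pow_four_le (W X Y Z : Finset ℕ) :
    #(addQuads W X Y Z) ^ 4 ≤ addEnergy W * addEnergy X * (addEnergy Y * addEnergy Z) :=
  calc #(addQuads W X Y Z) ^ 4 = (#(addQuads W X Y Z) ^ 2) ^ 2 := by ring
    _ ≤ (#(addQuads W X W X) * #(addQuads Y Z Y Z)) ^ 2 :=
      Nat.pow_le_pow_left (card_addQuads_sq_le W X Y Z) 2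
    _ = #(addQuads W X W X) ^ 2 * #(addQuads Y Z Y Z) ^ 2 := mul_pow _ _ _
    _ ≤ _ := Nat.mul_le_mul (card_addQuads_sq_le_addEnergy_mul W X)
      (card_addQuads_sq_le_addEnergy_mul Y Z)

lemma le_sqrt_mul_sqrt_of_pow_four_le {q x y : ℕ} (h : q ^ 4 ≤ x * y * (x * y)) :
    (q : ℝ) ≤ √x * √y := by
  have hq : q ^ 2 ≤ x * y :=
    (Nat.pow_le_pow_iff_left two_ne_zero).1 (by rw [← pow_mul, sq]; exact h)
  rw [← Real.sqrt_mul (Nat.cast_nonneg _), Real.le_sqrt (Nat.cast_nonneg _) (by positivity)]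
  exact_mod_cast hq

theorem sqrt_addEnergy_le_sum_fibres {β : Type*} [DecidableEq β] {A : Finset ℕ} (v : ℕ → β)
    (hv : ∀ a ∈ A, ∀ b ∈ A, ∀ c ∈ A, ∀ d ∈ A, a + b = c + d →
      v a = v b ∨ v a = v c ∨ v a = v d ∨ v b = v c ∨ v b = v d ∨ v c = v d) :
    √(addEnergy A) ≤ 6 * ∑ m ∈ A.image v, √(addEnergy {a ∈ A | v a = m}) := by
  set F : β → Finset ℕ := fun m => {a ∈ A | v a = m}
  let shapes (B : Finset ℕ) : Fin 6 → Finset ((ℕ × ℕ) × ℕ × ℕ) :=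
    ![addQuads B B A A, addQuads B A B A, addQuads B A A B,
      addQuads A B B A, addQuads A B A B, addQuads A A B B]
  have hcover : addQuads A A A A ⊆ (A.image v).biUnion fun m => univ.biUnion (shapes (F m)) := by
    rintro ⟨⟨a, b⟩, c, d⟩ hq
    simp only [addQuads, collisions, mem_filter, mem_product] at hq
    obtain ⟨⟨⟨ha, hb⟩, hc, hd⟩, he⟩ := hq
    simp only [mem_biUnion, mem_univ, true_and, mem_image]
    rcases hv a ha b hb c hc d hd he with h | h | h | h | h | h
    · exact ⟨v a, ⟨a, ha, rfl⟩, 0, by simp [shapes, addQuads, collisions, F, *]⟩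
    · exact ⟨v a, ⟨a, ha, rfl⟩, 1, by simp [shapes, addQuads, collisions, F, *]⟩
    · exact ⟨v a, ⟨a, ha, rfl⟩, 2, by simp [shapes, addQuads, collisions, F, *]⟩
    · exact ⟨v b, ⟨b, hb, rfl⟩, 3, by simp [shapes, addQuads, collisions, F, *]⟩
    · exact ⟨v b, ⟨b, hb, rfl⟩, 4, by simp [shapes, addQuads, collisions, F, *]⟩
    · exact ⟨v c, ⟨c, hc, rfl⟩, 5, by simp [shapes, addQuads, collisions, F, *]⟩
  have hshape (B : Finset ℕ) (i : Fin 6) :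
      (#(shapes B i) : ℝ) ≤ √(addEnergy B) * √(addEnergy A) := by
    apply le_sqrt_mul_sqrt_of_pow_four_le
    fin_cases i <;> exact (card_addQuads_pow_four_le _ _ _ _).trans_eq (by ring)
  have hE : (addEnergy A : ℝ) ≤ √(addEnergy A) * (6 * ∑ m ∈ A.image v, √(addEnergy (F m))) :=
    calc (addEnergy A : ℝ) = #(addQuads A A A A) := by rw [addEnergy_eq_card_addQuads]
      _ ≤ ∑ m ∈ A.image v, ∑ i, (#(shapes (F m) i) : ℝ) := by
        exact_mod_cast (card_le_card hcover).trans <| card_biUnion_le.trans <|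
          sum_le_sum fun m _ => card_biUnion_le
      _ ≤ ∑ m ∈ A.image v, ∑ _i : Fin 6, √(addEnergy (F m)) * √(addEnergy A) :=
        sum_le_sum fun m _ => sum_le_sum fun i _ => hshape (F m) i
      _ = _ := by
        simp only [sum_const, card_univ, Fintype.card_fin, nsmul_eq_mul, mul_sum]
        exact sum_congr rfl fun m _ => by ring
  have hS : 0 ≤ 6 * ∑ m ∈ A.image v, √(addEnergy (F m) : ℝ) := by positivity
  nlinarith [Real.mul_self_sqrt (Nat.cast_nonneg (α := ℝ) (addEnergy A)),
    Real.sqrt_nonneg (addEnergy A : ℝ)]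

lemma Nat.Prime.factorization_le_of_add_eq {p : ℕ} (hp : p.Prime) {x y z w : ℕ} (hx : x ≠ 0)
    (hy : y ≠ 0) (hz : z ≠ 0) (hw : w ≠ 0) (h : x + y = z + w) :
    y.factorization p ≤ x.factorization p ∨ z.factorization p ≤ x.factorization p ∨
      w.factorization p ≤ x.factorization p := by
  by_contra! hlt
  obtain ⟨hy', hz', hw'⟩ := hlt
  have hdvd (n : ℕ) (hn : n ≠ 0) (hlt : x.factorization p < n.factorization p) :
      p ^ (x.factorization p + 1) ∣ n :=
    (hp.pow_dvd_iff_le_factorization hn).2 hlt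
  have hx' : p ^ (x.factorization p + 1) ∣ x := by
    have := Nat.dvd_sub (h ▸ dvd_add (hdvd z hz hz') (hdvd w hw hw')) (hdvd y hy hy')
    rwa [Nat.add_sub_cancel] at this
  exact (Nat.lt_irrefl _) ((hp.pow_dvd_iff_le_factorization hx).1 hx')

theorem Nat.Prime.factorization_eq_of_add_eq {p : ℕ} (hp : p.Prime) {a b c d : ℕ} (ha : a ≠ 0)
    (hb : b ≠ 0) (hc : c ≠ 0) (hd : d ≠ 0) (h : a + b = c + d) :
    a.factorization p = b.factorization p ∨ a.factorization p = c.factorization p ∨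
      a.factorization p = d.factorization p ∨ b.factorization p = c.factorization p ∨
      b.factorization p = d.factorization p ∨ c.factorization p = d.factorization p := by
  have := hp.factorization_le_of_add_eq ha hb hc hd h
  have := hp.factorization_le_of_add_eq hb ha hc hd (by omega)
  have := hp.factorization_le_of_add_eq hc hd ha hb h.symm
  have := hp.factorization_le_of_add_eq hd hc ha hb (by omega)
  omega

theorem finrank_vectorSpan_lt_of_map_ne {k V W : Type*} [DivisionRing k] [AddCommGroup V]
    [Module k V] [AddCommGroup W] [Module k W]
    {s t : Set V} (hs : s.Finite) (hts : t ⊆ s) (φ : V →ₗ[k] W)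
    (ht : ∀ x ∈ t, ∀ y ∈ t, φ x = φ y) {x y : V} (hx : x ∈ s) (hy : y ∈ s) (hxy : φ x ≠ φ y) :
    finrank k (vectorSpan k t) < finrank k (vectorSpan k s) := by
  have := finiteDimensional_vectorSpan_of_finite k hs
  have hle : vectorSpan k t ≤ vectorSpan k s ⊓ LinearMap.ker φ := by
    rw [vectorSpan_def, Submodule.span_le]
    rintro _ ⟨a, ha, b, hb, rfl⟩
    exact ⟨vectorSpan_mono k hts (vsub_mem_vectorSpan k ha hb),
      by simp [vsub_eq_sub, ht a ha b hb]⟩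
  have hlt : vectorSpan k s ⊓ LinearMap.ker φ < vectorSpan k s := by
    refine inf_le_left.lt_of_ne fun heq => hxy ?_
    have hmem : x -ᵥ y ∈ vectorSpan k s ⊓ LinearMap.ker φ :=
      heq.symm ▸ vsub_mem_vectorSpan k hx hy
    simpa [vsub_eq_sub, sub_eq_zero] using hmem.2
  exact (Submodule.finrank_mono hle).trans_lt (Submodule.finrank_lt_finrank_of_lt hlt)

section Freiman

lemma card_add_add_card_filter_le {M : Type*} [AddCommMonoid M] [LinearOrder M]
    [IsOrderedCancelAddMonoid M] [DecidableEq M] {s : Finset M} {v : M} (hv : ∀ x ∈ s, x < v) :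
    #(s + s) + #{a ∈ s | v + a ∉ s + s} + 1 ≤ #(insert v s + insert v s) := by
  set G := {a ∈ s | v + a ∉ s + s}
  have hvG : v ∉ G := fun h => (hv v (mem_filter.1 h).1).false
  have hdisj : Disjoint (s + s) ((insert v G).image (v + ·)) := by
    rw [disjoint_right]
    rintro _ hx
    obtain ⟨g, hg, rfl⟩ := mem_image.1 hx
    rcases mem_insert.1 hg with rfl | hg
    · intro h
      obtain ⟨b, hb, c, hc, hbc⟩ := mem_add.1 h
      exact (add_lt_add (hv b hb) (hv c hc)).ne hbc
    · exact (mem_filter.1 hg).2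
  have hsub : s + s ∪ (insert v G).image (v + ·) ⊆ insert v s + insert v s :=
    union_subset (add_subset_add (subset_insert _ _) (subset_insert _ _)) <|
      image_subset_iff.2 fun g hg => add_mem_add (mem_insert_self _ _)
        (insert_subset_insert _ (filter_subset _ _) hg)
  calc #(s + s) + #G + 1 = #(s + s ∪ (insert v G).image (v + ·)) := by
        rw [card_union_of_disjoint hdisj, card_image_of_injective _ (add_right_injective v),
          card_insert_of_notMem hvG, add_assoc]
    _ ≤ _ := card_le_card hsub

lemma vectorSpan_insert_eq_of_add_mem {k V : Type*} [Ring k] [AddCommGroup V] [Module k V]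
    {s : Set V} {v a : V} (ha : a ∈ s) (h : v + a ∈ s + s) :
    vectorSpan k (insert v s) = vectorSpan k s := by
  obtain ⟨b, hb, c, hc, hbc : b + c = v + a⟩ := h
  refine vectorSpan_insert_eq_vectorSpan <|
    (AffineSubspace.vsub_right_mem_direction_iff_mem (subset_affineSpan k s hc) v).1 ?_
  rw [direction_affineSpan, vsub_eq_sub, sub_eq_sub_iff_add_eq_add.2 hbc.symm]
  exact vsub_mem_vectorSpan k hb ha

variable {k V : Type*} [DivisionRing k] [AddCommGroup V] [LinearOrder V] [IsOrderedAddMonoid V]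
  [Module k V] [DecidableEq V]

lemma finrank_vectorSpan_insert_le_card_filter {s : Finset V} {v : V} (hv : ∀ x ∈ s, x < v) :
    finrank k (vectorSpan k (insert v s : Set V)) ≤ #{a ∈ s | v + a ∉ s + s} := by
  classical
  set G := {a ∈ s | v + a ∉ s + s}
  set U := Submodule.span k ((G.image (· - v) : Finset V) : Set V)
  have hspan : ∀ a ∈ s, a - v ∈ U := by
    by_contra! hbad
    -- a largest `a` with `a - v ∉ U` is not in `G`, so `v + a = b + c` with `b, c > a`
    obtain ⟨a, ha, hmax⟩ := exists_max_image {a ∈ s | a - v ∉ U} id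
      (by simpa [Finset.Nonempty] using hbad)
    rw [mem_filter] at ha
    have haG : v + a ∈ s + s := by
      by_contra h
      exact ha.2 (Submodule.subset_span (mem_image_of_mem _ (mem_filter.2 ⟨ha.1, h⟩)))
    obtain ⟨b, hb, c, hc, hbc⟩ := mem_add.1 haG
    have hgood : ∀ x ∈ s, a < x → x - v ∈ U :=
      fun x hx hax => by_contra fun h => (hmax x (mem_filter.2 ⟨hx, h⟩)).not_gt hax
    have hab : a < b := by
      have := (add_lt_add_iff_left b).2 (hv c hc)
      rwa [hbc, add_comm b, add_lt_add_iff_left] at this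
    have hac : a < c := by
      have := (add_lt_add_iff_right c).2 (hv b hb)
      rwa [hbc, add_lt_add_iff_left] at this
    have hsum : a - v = (b - v) + (c - v) :=
      calc a - v = (v + a) - v - v := by abel
        _ = (b - v) + (c - v) := by rw [← hbc]; abel
    exact ha.2 (hsum ▸ add_mem (hgood b hb hab) (hgood c hc hac))
  have hle : vectorSpan k (insert v s : Set V) ≤ U := by
    rw [vectorSpan_eq_span_vsub_set_right k (Set.mem_insert v _), Submodule.span_le]
    rintro _ ⟨x, hx | hx, rfl⟩
    · simp [hx]
    · exact hspan x hx
  calc finrank k (vectorSpan k (insert v s : Set V))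
      ≤ finrank k U := Submodule.finrank_mono hle
    _ ≤ #(G.image (· - v)) := finrank_span_finset_le_card _
    _ ≤ #G := card_image_le

/-- Freiman's lemma `|s + s| ≥ (d + 1)|s| - d(d + 1)/2`, with denominators and subtraction
cleared. -/
theorem freiman_card_add (s : Finset V) :
    2 * ((finrank k (vectorSpan k (s : Set V)) + 1) * #s) ≤
      2 * #(s + s) + finrank k (vectorSpan k (s : Set V)) *
        (finrank k (vectorSpan k (s : Set V)) + 1) := by
  induction s using Finset.induction_on_max with
  | empty => simp
  | insert v s hv ih =>
    rw [coe_insert]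
    set d' := finrank k (vectorSpan k (s : Set V))
    set d := finrank k (vectorSpan k (insert v s : Set V))
    set G := {a ∈ s | v + a ∉ s + s}
    have hcard : #(insert v s) = #s + 1 := card_insert_of_notMem fun h => (hv v h).false
    have hsums := card_add_add_card_filter_le hv
    have hdG : d ≤ #G := finrank_vectorSpan_insert_le_card_filter hv
    have hGs : #G ≤ #s := card_filter_le _ _
    have := finiteDimensional_vectorSpan_of_finite k (s.finite_toSet.insert v)
    have hd'd : d' ≤ d := Submodule.finrank_mono (vectorSpan_mono k (Set.subset_insert _ _))
    have hdd' : d ≤ d' + 1 := finrank_vectorSpan_insert_le_set k _ _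
    have hcases : d = d' ∨ #G = #s := by
      refine or_iff_not_imp_right.2 fun hG => ?_
      obtain ⟨a, ha, hva⟩ : ∃ a ∈ s, v + a ∈ s + s := by
        simpa using mt card_filter_eq_iff.2 hG
      simp only [d, d']
      rw [vectorSpan_insert_eq_of_add_mem (k := k) (mem_coe.2 ha) (by rwa [← coe_add, mem_coe])]
    rw [hcard]
    rcases hcases with h | h <;> nlinarith

theorem finrank_vectorSpan_le_of_card_add_le {s : Finset V} {K : ℕ} (h : #(s + s) ≤ K * #s) :
    finrank k (vectorSpan k (s : Set V)) ≤ 2 * K := by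
  rcases s.eq_empty_or_nonempty with rfl | hs
  · rw [coe_empty, vectorSpan_empty, finrank_bot]
    exact Nat.zero_le _
  obtain ⟨n, hn⟩ := Nat.exists_eq_add_one.2 hs.card_pos
  have hd : finrank k (vectorSpan k (s : Set V)) ≤ n := by
    have := finrank_vectorSpan_image_finset_le k id s hn
    rwa [image_id] at this
  have := freiman_card_add (k := k) s
  rw [hn] at this h
  nlinarith

end Freiman

/-- Exponent vectors live in the lexicographically ordered space `Lex (ℕ →₀ ℚ)`, so that Freiman's
lemma for linearly ordered spaces applies to them. -/
noncomputable def primeExponents (a : ℕ) : Lex (ℕ →₀ ℚ) :=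
  toLex (a.factorization.mapRange (↑) Nat.cast_zero)

noncomputable def expDim (A : Finset ℕ) : ℕ :=
  finrank ℚ (vectorSpan ℚ ((A.image primeExponents : Finset _) : Set (Lex (ℕ →₀ ℚ))))

noncomputable def exponentAt (p : ℕ) : Lex (ℕ →₀ ℚ) →ₗ[ℚ] ℚ :=
  Finsupp.lapply p ∘ₗ (ofLexLinearEquiv ℚ (ℕ →₀ ℚ)).toLinearMap

@[simp]
lemma exponentAt_primeExponents (p a : ℕ) :
    exponentAt p (primeExponents a) = a.factorization p := by
  simp [exponentAt, primeExponents]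

lemma primeExponents_mul {a b : ℕ} (ha : a ≠ 0) (hb : b ≠ 0) :
    primeExponents (a * b) = primeExponents a + primeExponents b := by
  simp [primeExponents, Nat.factorization_mul ha hb, Finsupp.mapRange_add]

lemma primeExponents_injOn : Set.InjOn primeExponents {a | a ≠ 0} := fun a ha b hb h =>
  Nat.eq_of_factorization_eq ha hb fun p => by
    simpa using congrArg (exponentAt p) h

lemma exists_prime_factorization_ne {a b : ℕ} (ha : a ≠ 0) (hb : b ≠ 0) (hab : a ≠ b) :
    ∃ p, p.Prime ∧ a.factorization p ≠ b.factorization p := by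
  obtain ⟨p, hp⟩ : ∃ p, a.factorization p ≠ b.factorization p := by
    by_contra! h
    exact hab (Nat.eq_of_factorization_eq ha hb h)
  refine ⟨p, by_contra fun hnp => hp ?_, hp⟩
  simp [Nat.factorization_eq_zero_of_not_prime _ hnp]

lemma sqrt_addEnergy_le_card {A : Finset ℕ} (h : #A ≤ 1) : √(addEnergy A : ℝ) ≤ #A := by
  obtain ⟨x, hx⟩ := card_le_one_iff_subset_singleton.1 h
  rcases subset_singleton_iff.1 hx with rfl | rfl <;> simp [addEnergy, filter_singleton]

lemma exists_prime_expDim_fibre_lt {A : Finset ℕ} (hA : ∀ a ∈ A, 0 < a) (h : 1 < #A) :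
    ∃ p, p.Prime ∧ ∀ m, expDim {a ∈ A | a.factorization p = m} < expDim A := by
  obtain ⟨x, hx, y, hy, hxy⟩ := one_lt_card.1 h
  obtain ⟨p, hp, hpxy⟩ := exists_prime_factorization_ne (hA x hx).ne' (hA y hy).ne' hxy
  refine ⟨p, hp, fun m => finrank_vectorSpan_lt_of_map_ne (A.image primeExponents).finite_toSet
    (coe_subset.2 (image_subset_image (filter_subset _ _))) (exponentAt p) ?_
    (mem_image_of_mem _ hx) (mem_image_of_mem _ hy) (by simpa using hpxy)⟩
  simp only [coe_image, coe_filter, Set.forall_mem_image]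
  intro a ha b hb
  simp [ha.2, hb.2]

theorem sqrt_addEnergy_le_of_expDim_le (n : ℕ) {A : Finset ℕ} (hA : ∀ a ∈ A, 0 < a)
    (hn : expDim A ≤ n) : √(addEnergy A : ℝ) ≤ 6 ^ n * #A := by
  induction n generalizing A with
  | zero =>
    obtain h1 | h1 := le_or_gt #A 1
    · simpa using sqrt_addEnergy_le_card h1
    · obtain ⟨p, -, hp⟩ := exists_prime_expDim_fibre_lt hA h1
      exact absurd (hp 0) (by omega)
  | succ n ih =>
    obtain h1 | h1 := le_or_gt #A 1
    · exact (sqrt_addEnergy_le_card h1).trans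
        (le_mul_of_one_le_left (Nat.cast_nonneg _) (one_le_pow₀ (by norm_num)))
    obtain ⟨p, hp, hfibre⟩ := exists_prime_expDim_fibre_lt hA h1
    calc √(addEnergy A : ℝ)
        ≤ 6 * ∑ m ∈ A.image (·.factorization p), √(addEnergy {a ∈ A | a.factorization p = m}) :=
          sqrt_addEnergy_le_sum_fibres _ fun a ha b hb c hc d hd h =>
            hp.factorization_eq_of_add_eq (hA a ha).ne' (hA b hb).ne' (hA c hc).ne'
              (hA d hd).ne' h
      _ ≤ 6 * ∑ m ∈ A.image (·.factorization p),
            6 ^ n * (#{a ∈ A | a.factorization p = m} : ℝ) := by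
          gcongr with m
          exact ih (fun a ha => hA a (mem_filter.1 ha).1) (by have := hfibre m; omega)
      _ = 6 ^ (n + 1) * #A := by
          rw [← mul_sum, card_eq_sum_card_image (·.factorization p) A]
          push_cast
          ring

/-- Chang's theorem: there is an absolute constant `c > 0` such that any finite set of
positive integers with `|AA| ≤ K|A|` has additive energy at most `c^K |A|^2`. -/
theorem chang_energy : ∃ c : ℝ, 0 < c ∧
    ∀ (K : ℕ), 0 < K → ∀ A : Finset ℕ, (∀ a ∈ A, 0 < a) →
      (A * A).card ≤ K * A.card →
      (addEnergy A : ℝ) ≤ c ^ K * (A.card : ℝ) ^ 2 := by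
  refine ⟨6 ^ 4, by norm_num, fun K _ A hA hAA => ?_⟩
  set S := A.image primeExponents
  have hS : #S = #A := card_image_of_injOn (primeExponents_injOn.mono fun a ha => (hA a ha).ne')
  have hSS : S + S ⊆ (A * A).image primeExponents := by
    intro z hz
    obtain ⟨_, hx, _, hy, rfl⟩ := mem_add.1 hz
    obtain ⟨a, ha, rfl⟩ := mem_image.1 hx
    obtain ⟨b, hb, rfl⟩ := mem_image.1 hy
    exact mem_image.2 ⟨a * b, mul_mem_mul ha hb, primeExponents_mul (hA a ha).ne' (hA b hb).ne'⟩
  have hdoubling : #(S + S) ≤ K * #S := hS ▸ (card_le_card hSS).trans (card_image_le.trans hAA)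
  have hbound := sqrt_addEnergy_le_of_expDim_le (2 * K) hA
    (finrank_vectorSpan_le_of_card_add_le hdoubling)
  calc (addEnergy A : ℝ) = √(addEnergy A : ℝ) ^ 2 := (Real.sq_sqrt (Nat.cast_nonneg _)).symm
    _ ≤ (6 ^ (2 * K) * #A) ^ 2 := pow_le_pow_left₀ (Real.sqrt_nonneg _) hbound 2
    _ = (6 ^ 4) ^ K * (#A : ℝ) ^ 2 := by rw [mul_pow, ← pow_mul, ← pow_mul]; ring_nf
end

section
/- (Separation composition.) Suppose a finite set A ⊆ ℤ_{>0} decomposes as A = ⋃_{b ∈ B} b·C_b where B ⊆ ℤ_{>0}, each C_b ⊆ ℤ_{>0}, and gcd(b, c) = 1 for all b ∈ B and all c ∈ C_{b'} for every b' ∈ B. If B is ψ_1-separating and each C_b is ψ_2-separating, then A is ψ_1ψ_2-separating. -/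
/-- A finite set `S` of positive integers is `ψ`-separating if for every family of finite sets
`X s` of positive integers with `gcd(s, x) = 1` for all `s ∈ S` and `x ∈ X s'` (all `s' ∈ S`),
the set `Y = ⋃_{s ∈ S} s • X s` satisfies `E₊(Y)^{1/2} ≤ ψ ∑_{s ∈ S} E₊(X s)^{1/2}`. -/
def Separating (S : Finset ℕ) (ψ : ℝ) : Prop :=
  ∀ X : ℕ → Finset ℕ,
    (∀ s ∈ S, ∀ x ∈ X s, 0 < x) →
    (∀ s ∈ S, ∀ s' ∈ S, ∀ x ∈ X s', Nat.Coprime s x) →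
    Real.sqrt (addEnergy (S.biUnion (fun s => (X s).image (fun x => s * x)))) ≤
      ψ * ∑ s ∈ S, Real.sqrt (addEnergy (X s))

lemma one_le_addEnergy {S : Finset ℕ} {a : ℕ} (ha : a ∈ S) : 1 ≤ addEnergy S := by
  apply Finset.card_pos.2
  exact ⟨(a, a, a, a), by simp [Finset.mem_filter, Finset.mem_product, ha]⟩

lemma addEnergy_singleton (x : ℕ) : addEnergy {x} = 1 := by
  unfold addEnergy
  rw [Finset.singleton_product_singleton, Finset.singleton_product_singleton,
    Finset.singleton_product_singleton, Finset.filter_singleton]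
  simp

lemma addEnergy_image_affine (S : Finset ℕ) (d m : ℕ) (hm : 0 < m) :
    addEnergy (S.image fun z => d + m * z) = addEnergy S := by
  unfold addEnergy
  symm
  apply Finset.card_bij (i := fun p _ =>
    (d + m * p.1, d + m * p.2.1, d + m * p.2.2.1, d + m * p.2.2.2))
  · rintro ⟨a, b, c, e⟩ hp
    simp only [Finset.mem_filter, Finset.mem_product] at hp ⊢
    obtain ⟨⟨ha, hb, hc, he⟩, hsum⟩ := hp
    refine ⟨⟨Finset.mem_image_of_mem _ ha, Finset.mem_image_of_mem _ hb,
      Finset.mem_image_of_mem _ hc, Finset.mem_image_of_mem _ he⟩, ?_⟩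
    show d + m * a + (d + m * b) = d + m * c + (d + m * e)
    rw [add_add_add_comm, add_add_add_comm d (m*c), ← Nat.mul_add, ← Nat.mul_add, hsum]
  · rintro ⟨a, b, c, e⟩ hp ⟨a', b', c', e'⟩ hp' h
    simp only [Prod.mk.injEq] at h
    obtain ⟨h1, h2, h3, h4⟩ := h
    have k : ∀ u u' : ℕ, d + m * u = d + m * u' → u = u' := fun u u' h =>
      Nat.eq_of_mul_eq_mul_left hm (Nat.add_left_cancel h)
    exact Prod.ext (k _ _ h1) (Prod.ext (k _ _ h2) (Prod.ext (k _ _ h3) (k _ _ h4)))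
  · rintro ⟨a, b, c, e⟩ hp
    simp only [Finset.mem_filter, Finset.mem_product, Finset.mem_image] at hp
    obtain ⟨⟨⟨a', ha', rfl⟩, ⟨b', hb', rfl⟩, ⟨c', hc', rfl⟩, ⟨e', he', rfl⟩⟩, hsum⟩ := hp
    refine ⟨(a', b', c', e'), ?_, rfl⟩
    simp only [Finset.mem_filter, Finset.mem_product]
    refine ⟨⟨ha', hb', hc', he'⟩, ?_⟩
    have hsum' : d + m * a' + (d + m * b') = d + m * c' + (d + m * e') := hsum
    rw [add_add_add_comm, add_add_add_comm d (m*c'), ← Nat.mul_add, ← Nat.mul_add] at hsum'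
    exact Nat.eq_of_mul_eq_mul_left hm (Nat.add_left_cancel hsum')

/-- Separation composition: if `A = ⋃_{b ∈ B} b • C_b` with `b` coprime to every element of every
`C_{b'}`, `B` is `ψ₁`-separating and each `C_b` is `ψ₂`-separating, then `A` is
`ψ₁ψ₂`-separating. -/
theorem separating_comp (A B : Finset ℕ) (C : ℕ → Finset ℕ) (ψ₁ ψ₂ : ℝ)
    (hBpos : ∀ b ∈ B, 0 < b)
    (hCpos : ∀ b ∈ B, ∀ c ∈ C b, 0 < c)
    (hA : A = B.biUnion (fun b => (C b).image (fun c => b * c)))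
    (hcop : ∀ b ∈ B, ∀ b' ∈ B, ∀ c ∈ C b', Nat.Coprime b c)
    (hB : Separating B ψ₁) (hC : ∀ b ∈ B, Separating (C b) ψ₂) :
    Separating A (ψ₁ * ψ₂) := by
  classical
  intro X hXpos hXcop
  by_cases hgood : ∃ b ∈ B, (C b).Nonempty
  case neg =>
    have hAe : A = ∅ := by
      rw [hA]
      ext a
      simp only [Finset.mem_biUnion, Finset.mem_image, Finset.notMem_empty, iff_false]
      rintro ⟨b, hb, c, hc, -⟩
      exact hgood ⟨b, hb, c, hc⟩
    simp [hAe, addEnergy]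
  case pos =>
  obtain ⟨b₀, hb₀, hC₀⟩ := hgood
  -- membership in A
  have hmemA : ∀ b ∈ B, ∀ c ∈ C b, b * c ∈ A := by
    intro b hb c hc
    rw [hA]
    exact Finset.mem_biUnion.2 ⟨b, hb, Finset.mem_image.2 ⟨c, hc, rfl⟩⟩
  -- ψ₁ is positive
  have hψ₁ : 0 ≤ ψ₁ := by
    have h1 := hB (fun _ => ({1} : Finset ℕ))
      (by intro s hs x hx; simp at hx; omega)
      (by intro s hs s' hs' x hx; simp at hx; subst hx; exact Nat.coprime_one_right s)
    have hmem : b₀ * 1 ∈ B.biUnion (fun s => ({1} : Finset ℕ).image (fun x => s * x)) :=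
      Finset.mem_biUnion.2 ⟨b₀, hb₀, Finset.mem_image.2 ⟨1, Finset.mem_singleton_self 1, rfl⟩⟩
    have hE : (1:ℝ) ≤ Real.sqrt (addEnergy (B.biUnion
        (fun s => ({1} : Finset ℕ).image (fun x => s * x)))) := by
      rw [show (1:ℝ) = Real.sqrt 1 by rw [Real.sqrt_one]]
      apply Real.sqrt_le_sqrt
      exact_mod_cast one_le_addEnergy hmem
    have hsum1 : ∑ s ∈ B, Real.sqrt (addEnergy ({1} : Finset ℕ)) = (B.card : ℝ) := by
      simp [addEnergy_singleton]
    rw [hsum1] at h1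
    have hcard : (1:ℝ) ≤ (B.card : ℝ) := by
      exact_mod_cast Finset.card_pos.2 ⟨b₀, hb₀⟩
    nlinarith [le_trans hE h1]
  -- definitions
  set B' := B.filter (fun b => (C b).Nonempty) with hB'def
  set Q := ∏ b ∈ B', b with hQdef
  set P := ∏ b ∈ B, b with hPdef
  set v := ∏ p ∈ P.primeFactors.filter (fun p => ¬ p ∣ Q), p with hvdef
  set Z : ℕ → Finset ℕ :=
    fun b => (C b).biUnion (fun c => (X (b * c)).image (fun x => c * x)) with hZdef
  set V : ℕ → Finset ℕ := fun b => (Z b).image (fun z => Q ^ 2 / b + v * z) with hVdef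
  have hPpos : 0 < P := Finset.prod_pos hBpos
  have hvpos : 0 < v := by
    apply Finset.prod_pos
    intro p hp
    exact (Nat.prime_of_mem_primeFactors (Finset.mem_filter.1 hp).1).pos
  have hdvdQ : ∀ b ∈ B, (C b).Nonempty → b ∣ Q :=
    fun b hb hne => Finset.dvd_prod_of_mem _ (Finset.mem_filter.2 ⟨hb, hne⟩)
  -- elements of Z b are positive
  have hZpos : ∀ b ∈ B, ∀ z ∈ Z b, 0 < z := by
    intro b hb z hz
    obtain ⟨c, hc, hz2⟩ := Finset.mem_biUnion.1 hz
    obtain ⟨x, hx, rfl⟩ := Finset.mem_image.1 hz2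
    exact Nat.mul_pos (hCpos b hb c hc) (hXpos (b*c) (hmemA b hb c hc) x hx)
  -- positivity hypothesis for V
  have hVpos : ∀ s ∈ B, ∀ w ∈ V s, 0 < w := by
    intro s hs w hw
    obtain ⟨z, hz, rfl⟩ := Finset.mem_image.1 hw
    have := hZpos s hs z hz
    positivity
  -- coprimality hypothesis for V
  have hVcop : ∀ s ∈ B, ∀ s' ∈ B, ∀ w ∈ V s', Nat.Coprime s w := by
    intro s hs s' hs' w hw
    obtain ⟨z, hz, rfl⟩ := Finset.mem_image.1 hw
    obtain ⟨c, hc, hz2⟩ := Finset.mem_biUnion.1 hz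
    obtain ⟨x, hx, rfl⟩ := Finset.mem_image.1 hz2
    by_contra hnc
    obtain ⟨p, pp, hps, hpw⟩ := Nat.Prime.not_coprime_iff_dvd.1 hnc
    have hs'Q : s' ∣ Q := hdvdQ s' hs' ⟨c, hc⟩
    by_cases hpQ : p ∣ Q
    · obtain ⟨bs, hbs, hpb⟩ := pp.prime.exists_mem_finset_dvd hpQ
      have hbB : bs ∈ B := (Finset.mem_filter.1 hbs).1
      obtain ⟨cs, hcs⟩ := (Finset.mem_filter.1 hbs).2
      have h1 : p ∣ Q ^ 2 / s' := by
        have he : Q ^ 2 / s' = Q * (Q / s') := by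
          rw [pow_two, Nat.mul_div_assoc Q hs'Q]
        rw [he]
        exact Dvd.dvd.mul_right hpQ _
      have h2 : p ∣ v * (c * x) := (Nat.dvd_add_right h1).1 hpw
      rcases (Nat.Prime.dvd_mul pp).1 h2 with hpv | hpcx
      · obtain ⟨q, hq, hpq⟩ := pp.prime.exists_mem_finset_dvd hpv
        have hqf := Finset.mem_filter.1 hq
        have hpq' : p = q :=
          (Nat.prime_dvd_prime_iff_eq pp (Nat.prime_of_mem_primeFactors hqf.1)).1 hpq
        exact hqf.2 (hpq' ▸ hpQ)
      · rcases (Nat.Prime.dvd_mul pp).1 hpcx with hpc | hpx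
        · have hcop' := hcop bs hbB s' hs' c hc
          exact pp.not_dvd_one (hcop' ▸ Nat.dvd_gcd hpb hpc)
        · have hcx := hXcop (bs * cs) (hmemA bs hbB cs hcs) (s' * c) (hmemA s' hs' c hc) x hx
          exact pp.not_dvd_one (hcx ▸ Nat.dvd_gcd (dvd_mul_of_dvd_left hpb _) hpx)
    · have hpP : p ∣ P := hps.trans (Finset.dvd_prod_of_mem _ hs)
      have hpv : p ∣ v := Finset.dvd_prod_of_mem _
        (Finset.mem_filter.2 ⟨Nat.mem_primeFactors.2 ⟨pp, hpP, hPpos.ne'⟩, hpQ⟩)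
      have h2 : p ∣ v * (c * x) := dvd_mul_of_dvd_left hpv _
      have h1 : p ∣ Q ^ 2 / s' := by
        have := Nat.dvd_sub hpw h2
        simpa using this
      have h3 : p ∣ Q ^ 2 := h1.trans (Nat.div_dvd_of_dvd (hs'Q.trans (dvd_pow_self Q two_ne_zero)))
      exact hpQ (pp.dvd_of_dvd_pow h3)
  -- apply hB
  have step1 := hB V hVpos hVcop
  -- key algebraic identity
  have hkey : ∀ b ∈ B, ∀ z ∈ Z b, b * (Q ^ 2 / b + v * z) = Q ^ 2 + v * (b * z) := by
    intro b hb z hz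
    obtain ⟨c, hc, -⟩ := Finset.mem_biUnion.1 hz
    have hbQ : b ∣ Q ^ 2 := (hdvdQ b hb ⟨c, hc⟩).trans (dvd_pow_self Q two_ne_zero)
    rw [Nat.mul_add, Nat.mul_div_cancel' hbQ]
    ring_nf
  -- the image identity
  have hE2 : B.biUnion (fun s => (V s).image (fun w => s * w)) =
      (B.biUnion (fun b => (Z b).image (fun z => b * z))).image (fun y => Q ^ 2 + v * y) := by
    rw [Finset.biUnion_image]
    apply Finset.biUnion_congr rfl
    intro b hb
    rw [hVdef]
    simp only
    rw [Finset.image_image, Finset.image_image]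
    apply Finset.image_congr
    intro z hz
    exact hkey b hb z hz
  -- goal set = biUnion of Z
  have hY : A.biUnion (fun s => (X s).image (fun x => s * x)) =
      B.biUnion (fun b => (Z b).image (fun z => b * z)) := by
    ext y
    simp only [hA, hZdef, Finset.mem_biUnion, Finset.mem_image]
    constructor
    · rintro ⟨a, ⟨b, hb, c, hc, rfl⟩, x, hx, rfl⟩
      exact ⟨b, hb, c * x, ⟨c, hc, x, hx, rfl⟩, (mul_assoc b c x).symm⟩
    · rintro ⟨b, hb, z, ⟨c, hc, x, hx, rfl⟩, rfl⟩
      exact ⟨b * c, ⟨b, hb, c, hc, rfl⟩, x, hx, mul_assoc b c x⟩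
  -- energy of V b equals energy of Z b
  have hEV : ∀ b, addEnergy (V b) = addEnergy (Z b) := by
    intro b
    rw [hVdef]
    exact addEnergy_image_affine (Z b) (Q ^ 2 / b) v hvpos
  -- rewrite step1
  rw [hE2, addEnergy_image_affine _ (Q ^ 2) v hvpos] at step1
  have step1' : Real.sqrt (addEnergy (B.biUnion (fun b => (Z b).image (fun z => b * z)))) ≤
      ψ₁ * ∑ b ∈ B, Real.sqrt (addEnergy (Z b)) := by
    calc _ ≤ ψ₁ * ∑ s ∈ B, Real.sqrt (addEnergy (V s)) := step1
    _ = ψ₁ * ∑ b ∈ B, Real.sqrt (addEnergy (Z b)) := by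
        congr 1
        exact Finset.sum_congr rfl (fun b _ => by rw [hEV b])
  -- apply hC to each b
  have step2 : ∀ b ∈ B, Real.sqrt (addEnergy (Z b)) ≤
      ψ₂ * ∑ c ∈ C b, Real.sqrt (addEnergy (X (b * c))) := by
    intro b hb
    have := hC b hb (fun c => X (b * c))
      (fun c hc x hx => hXpos (b * c) (hmemA b hb c hc) x hx)
      (by
        intro c hc c' hc' x hx
        have := hXcop (b * c) (hmemA b hb c hc) (b * c') (hmemA b hb c' hc') x hx
        exact Nat.Coprime.coprime_dvd_left (dvd_mul_left c b) this)
    exact this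
  -- sum over A equals double sum
  have hdisj : (B : Set ℕ).PairwiseDisjoint (fun b => (C b).image (fun c => b * c)) := by
    intro b hb b' hb' hne
    simp only [Function.onFun]
    rw [Finset.disjoint_left]
    intro a ha ha'
    obtain ⟨c, hc, rfl⟩ := Finset.mem_image.1 ha
    obtain ⟨c', hc', heq⟩ := Finset.mem_image.1 ha'
    have h1 : b ∣ b' * c' := ⟨c, heq⟩
    have h2 : b ∣ b' := (hcop b hb b' hb' c' hc').dvd_of_dvd_mul_right h1
    have h3 : b' ∣ b * c := ⟨c', heq.symm⟩
    have h4 : b' ∣ b := (hcop b' hb' b hb c hc).dvd_of_dvd_mul_right h3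
    exact hne (Nat.dvd_antisymm h2 h4)
  have hsum : ∑ a ∈ A, Real.sqrt (addEnergy (X a)) =
      ∑ b ∈ B, ∑ c ∈ C b, Real.sqrt (addEnergy (X (b * c))) := by
    rw [hA, Finset.sum_biUnion hdisj]
    apply Finset.sum_congr rfl
    intro b hb
    rw [Finset.sum_image]
    intro c hc c' hc' h
    exact Nat.eq_of_mul_eq_mul_left (hBpos b hb) h
  -- conclude
  calc Real.sqrt (addEnergy (A.biUnion (fun s => (X s).image (fun x => s * x))))
      = Real.sqrt (addEnergy (B.biUnion (fun b => (Z b).image (fun z => b * z)))) := by rw [hY]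
    _ ≤ ψ₁ * ∑ b ∈ B, Real.sqrt (addEnergy (Z b)) := step1'
    _ ≤ ψ₁ * ∑ b ∈ B, (ψ₂ * ∑ c ∈ C b, Real.sqrt (addEnergy (X (b * c)))) := by
        apply mul_le_mul_of_nonneg_left _ hψ₁
        exact Finset.sum_le_sum step2
    _ = ψ₁ * ψ₂ * ∑ a ∈ A, Real.sqrt (addEnergy (X a)) := by
        rw [hsum, ← Finset.mul_sum, ← mul_assoc]
end
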